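/- The matrix X̄ = [[1,0],[0,0]] is a strong but not a sharp minimizer of Θ(X) = (1/2)‖(2,1)ᵀ − (X₁₁, X₂₂)ᵀ‖² + ‖X‖_* over 2×2 real matrices: for X_ε = [[1+ε², ε],[ε, ε²]] one has Θ(X_ε) − Θ(X̄) = ε⁴ while ‖X_ε − X̄‖_F² = 2(ε² + ε⁴), so X̄ fails the quadratic growth condition along this curve. -/
import Mathlib

noncomputable def frobSq (X : Matrix (Fin 2) (Fin 2) ℝ) : ℝ :=
  ∑ i, ∑ j, (X i j) ^ 2

noncomputable def nuclearNorm (X : Matrix (Fin 2) (Fin 2) ℝ) : ℝ :=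
  Real.sqrt (frobSq X + 2 * |X.det|)

noncomputable def Θ (X : Matrix (Fin 2) (Fin 2) ℝ) : ℝ :=
  1 / 2 * ((2 - X 0 0) ^ 2 + (1 - X 1 1) ^ 2) + nuclearNorm X

lemma theta_bar : Θ (!![1, 0; 0, 0]) = 2 := by
  simp [Θ, nuclearNorm, frobSq, Matrix.det_fin_two, Fin.sum_univ_two]
  norm_num

lemma frob_diff (ε : ℝ) :
    frobSq (!![1 + ε ^ 2, ε; ε, ε ^ 2] - !![1, 0; 0, 0]) = 2 * (ε ^ 2 + ε ^ 4) := by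
  simp [frobSq, Fin.sum_univ_two, Matrix.sub_apply]
  ring

lemma theta_eps (ε : ℝ) : Θ (!![1 + ε ^ 2, ε; ε, ε ^ 2]) = 2 + ε ^ 4 := by
  have hdet : (!![1 + ε ^ 2, ε; ε, ε ^ 2] : Matrix (Fin 2) (Fin 2) ℝ).det = ε ^ 4 := by
    simp [Matrix.det_fin_two]; ring
  have habs : |ε ^ 4| = ε ^ 4 := abs_of_nonneg (by positivity)
  have harg : frobSq (!![1 + ε ^ 2, ε; ε, ε ^ 2]) + 2 * |(!![1 + ε ^ 2, ε; ε, ε ^ 2] : Matrix (Fin 2) (Fin 2) ℝ).det| = (1 + 2 * ε ^ 2) ^ 2 := by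
    rw [hdet, habs]
    simp [frobSq, Fin.sum_univ_two]
    ring
  have hnn : nuclearNorm (!![1 + ε ^ 2, ε; ε, ε ^ 2]) = 1 + 2 * ε ^ 2 := by
    rw [nuclearNorm, harg, Real.sqrt_sq (by positivity)]
  rw [Θ, hnn]
  simp
  ring

/-- Along the curve `X_ε = [[1+ε², ε],[ε, ε²]]` one has
`Θ(X_ε) − Θ(X̄) = ε⁴` while `‖X_ε − X̄‖_F² = 2(ε² + ε⁴)`, so
`X̄ = [[1,0],[0,0]]` fails quadratic growth: it is not a strong minimizer of `Θ`. -/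
theorem not_strong_minimizer_lasso_nuclear :
    (∀ ε : ℝ, 0 < ε →
      Θ (!![1 + ε ^ 2, ε; ε, ε ^ 2]) - Θ (!![1, 0; 0, 0]) = ε ^ 4 ∧
      frobSq (!![1 + ε ^ 2, ε; ε, ε ^ 2] - !![1, 0; 0, 0]) = 2 * (ε ^ 2 + ε ^ 4)) ∧
    ¬ ∃ κ > (0 : ℝ), ∃ δ > (0 : ℝ), ∀ X : Matrix (Fin 2) (Fin 2) ℝ,
        Real.sqrt (frobSq (X - !![1, 0; 0, 0])) ≤ δ →
        Θ X ≥ Θ (!![1, 0; 0, 0]) + κ / 2 * frobSq (X - !![1, 0; 0, 0]) := by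
  constructor
  · intro ε _
    exact ⟨by rw [theta_eps, theta_bar]; ring, frob_diff ε⟩
  · rintro ⟨κ, hκ, δ, hδ, h⟩
    set ε : ℝ := min 1 (min (δ / 2) (Real.sqrt κ / 2)) with hε
    have hεpos : 0 < ε := by
      apply lt_min (by norm_num)
      exact lt_min (by linarith) (by positivity)
    have hε1 : ε ≤ 1 := min_le_left _ _
    have hεδ : ε ≤ δ / 2 := le_trans (min_le_right _ _) (min_le_left _ _)
    have hεκ : ε ≤ Real.sqrt κ / 2 := le_trans (min_le_right _ _) (min_le_right _ _)
    have hε2κ : ε ^ 2 < κ := by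
      have h1 : ε ^ 2 ≤ (Real.sqrt κ / 2) ^ 2 := by
        apply pow_le_pow_left₀ hεpos.le hεκ
      have h2 : (Real.sqrt κ / 2) ^ 2 = κ / 4 := by
        rw [div_pow, Real.sq_sqrt hκ.le]; norm_num
      nlinarith
    have hball : Real.sqrt (frobSq (!![1 + ε ^ 2, ε; ε, ε ^ 2] - !![1, 0; 0, 0])) ≤ δ := by
      rw [frob_diff]
      have hε2 : ε ^ 2 ≤ 1 := by nlinarith
      have : 2 * (ε ^ 2 + ε ^ 4) ≤ (2 * ε) ^ 2 := by nlinarith [sq_nonneg ε]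
      calc Real.sqrt (2 * (ε ^ 2 + ε ^ 4)) ≤ Real.sqrt ((2 * ε) ^ 2) :=
            Real.sqrt_le_sqrt this
        _ = 2 * ε := Real.sqrt_sq (by positivity)
        _ ≤ δ := by linarith
    have := h _ hball
    rw [theta_eps, theta_bar, frob_diff] at this
    nlinarith [pow_pos hεpos 2, pow_pos hεpos 4]
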